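/- arXiv:2103.02360 — 2 statements merged into one kernel-verified Lean document; each statement's English description precedes it below -/
import Mathlib

section
/- On ℝ⁵ with coordinates (x,y,z,p,q), let σ₁ = sinh(y)cosh(z) dp − sinh(z) dy, σ₂ = −sinh(y)sinh(z) dp + cosh(z) dy, σ₃ = −dz − cosh(y) dp, let α ∈ ℝ with α² ≠ 1, and set ω₁ = −(σ₁ + exp(αx) dq), ω₂ = σ₂ + dx, ω₃ = −(σ₃ + α exp(αx) dq), ω₄ = −dx, ω₅ = exp(αx) dq. Let c ∈ ℝ with c ≠ 0 and c³ = 1/(α² − 1), set Q = (3α² − 7)·c²/10, and define θ₁ = ω₁, θ₂ = ω₂, θ₃ = c·ω₃, θ₄ = (1/c)·ω₄ + Q·θ₂, θ₅ = (1/c)·ω₅ + Q·θ₁. Then for every a ∈ ℝ⁵ and v ∈ ℝ⁵: c·(2·θ₁(a)(v)·θ₅(a)(v) − 2·θ₂(a)(v)·θ₄(a)(v) + (4/3)·θ₃(a)(v)²) = ω₄(a)(v)² − ω₅(a)(v)² + σ₁(a)(v)² − σ₂(a)(v)² + ((3α² − 7)/(5(α² − 1)) − 1)·(ω₁(a)(v)²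 − ω₂(a)(v)²) + (4/(3(α² − 1)))·ω₃(a)(v)². (This is the diagonal form of Nurowski's representative metric K^{1/3}g = ω₄² − ω₅² − (σ₂² − σ₁²) + ((3α²−7)/(5(α²−1)) − 1)(ω₁² − ω₂²) + (4/(3(α²−1)))ω₃², with K = 1/(α²−1).) -/
/-!
STATEMENT 8: the diagonal form of Nurowski's representative metric for the
rolling distribution:
c·(2θ₁θ₅ − 2θ₂θ₄ + (4/3)θ₃²) = ω₄² − ω₅² + σ₁² − σ₂²
  + ((3α²−7)/(5(α²−1)) − 1)(ω₁² − ω₂²) + (4/(3(α²−1)))ω₃².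
-/

noncomputable section

open Real

/-- coordinate differentials dx, dy, dz, dp, dq on ℝ⁵ -/
def dc (i : Fin 5) : (Fin 5 → ℝ) →L[ℝ] ℝ := ContinuousLinearMap.proj i

/-- σ₁ = sinh(y)cosh(z) dp − sinh(z) dy regarded on ℝ⁵ -/
def σ₁ : (Fin 5 → ℝ) → ((Fin 5 → ℝ) →L[ℝ] ℝ) :=
  fun a => (sinh (a 1) * cosh (a 2)) • dc 3 - sinh (a 2) • dc 1

/-- σ₂ = −sinh(y)sinh(z) dp + cosh(z) dy regarded on ℝ⁵ -/
def σ₂ : (Fin 5 → ℝ) → ((Fin 5 → ℝ) →L[ℝ] ℝ) :=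
  fun a => -((sinh (a 1) * sinh (a 2)) • dc 3) + cosh (a 2) • dc 1

/-- σ₃ = −dz − cosh(y) dp regarded on ℝ⁵ -/
def σ₃ : (Fin 5 → ℝ) → ((Fin 5 → ℝ) →L[ℝ] ℝ) :=
  fun a => -dc 2 - cosh (a 1) • dc 3

/-- ω₁ = −(σ₁ + exp(αx) dq) -/
def ω₁ (α : ℝ) : (Fin 5 → ℝ) → ((Fin 5 → ℝ) →L[ℝ] ℝ) :=
  fun a => -(σ₁ a + exp (α * a 0) • dc 4)

/-- ω₂ = σ₂ + dx -/
def ω₂ : (Fin 5 → ℝ) → ((Fin 5 → ℝ) →L[ℝ] ℝ) := fun a => σ₂ a + dc 0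

/-- ω₃ = −(σ₃ + α exp(αx) dq) -/
def ω₃ (α : ℝ) : (Fin 5 → ℝ) → ((Fin 5 → ℝ) →L[ℝ] ℝ) :=
  fun a => -(σ₃ a + (α * exp (α * a 0)) • dc 4)

/-- ω₄ = −dx -/
def ω₄ : (Fin 5 → ℝ) → ((Fin 5 → ℝ) →L[ℝ] ℝ) := fun _ => -dc 0

/-- ω₅ = exp(αx) dq -/
def ω₅ (α : ℝ) : (Fin 5 → ℝ) → ((Fin 5 → ℝ) →L[ℝ] ℝ) :=
  fun a => exp (α * a 0) • dc 4

theorem rolling_metric_diagonal_form (α : ℝ) (hα : α^2 ≠ 1)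
    (c : ℝ) (hc : c ≠ 0) (hc3 : c^3 = 1/(α^2 - 1)) :
    ∀ (a v : Fin 5 → ℝ),
      letI Q : ℝ := (3*α^2 - 7) * c^2 / 10
      letI θ₁ := ω₁ α
      letI θ₂ := ω₂
      letI θ₃ := fun a => c • ω₃ α a
      letI θ₄ := fun a => (1/c) • ω₄ a + Q • θ₂ a
      letI θ₅ := fun a => (1/c) • ω₅ α a + Q • θ₁ a
      c * (2 * θ₁ a v * θ₅ a v - 2 * θ₂ a v * θ₄ a v + (4/3) * (θ₃ a v)^2) =
        (ω₄ a v)^2 - (ω₅ α a v)^2 + (σ₁ a v)^2 - (σ₂ a v)^2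
        + ((3*α^2 - 7)/(5*(α^2 - 1)) - 1) * ((ω₁ α a v)^2 - (ω₂ a v)^2)
        + (4/(3*(α^2 - 1))) * (ω₃ α a v)^2 := by
  intro a v
  have hne : α^2 - 1 ≠ 0 := sub_ne_zero.mpr hα
  have h1 : 4/(3*(α^2 - 1)) = (4/3) * c^3 := by rw [hc3]; field_simp
  have h2 : (3*α^2 - 7)/(5*(α^2 - 1)) = 2 * c * ((3*α^2 - 7) * c^2 / 10) := by
    rw [show 2 * c * ((3*α^2 - 7) * c^2 / 10) = (3*α^2 - 7) * c^3 / 5 by ring, hc3]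
    field_simp
  simp only [ω₁, ω₂, ω₃, ω₄, ω₅, ContinuousLinearMap.add_apply,
    ContinuousLinearMap.neg_apply, ContinuousLinearMap.smul_apply,
    ContinuousLinearMap.sub_apply, smul_eq_mul, h1, h2]
  field_simp
  ring

end
end

section
/- On ℝ⁵ with coordinates (x,y,z,p,q), let σ₁ = sinh(y)cosh(z) dp − sinh(z) dy, σ₂ = −sinh(y)sinh(z) dp + cosh(z) dy, σ₃ = −dz − cosh(y) dp, let α ∈ ℝ with α² ≠ 1, and set ω₁ = −(σ₁ + exp(αx) dq), ω₂ = σ₂ + dx, ω₃ = −(σ₃ + α exp(αx) dq), ω₄ = −dx, ω₅ = exp(αx) dq. Let c ∈ ℝ with c ≠ 0 and c³ = 1/(α² − 1), set Q = (3α² − 7)·c²/10, and define the coframing θ₁ = ω₁, θ₂ = ω₂, θ₃ = c·ω₃, θ₄ = (1/c)·ω₄ + Q·θ₂, θ₅ = (1/c)·ω₅ + Q·θ₁. Then there exist smooth 1-forms Ω₁, …, Ω₇ on ℝ⁵ such that Cartan's structure equations hold at every point: dθ₁ = θ₁∧(2Ω₁+Ω₄) + θ₂∧Ω₂ + θ₃∧θ₄;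 dθ₂ = θ₁∧Ω₃ + θ₂∧(Ω₁+2Ω₄) + θ₃∧θ₅; dθ₃ = θ₁∧Ω₅ + θ₂∧Ω₆ + θ₃∧(Ω₁+Ω₄) + θ₄∧θ₅; dθ₄ = θ₁∧Ω₇ + (4/3)θ₃∧Ω₆ + θ₄∧Ω₁ + θ₅∧Ω₂; dθ₅ = θ₂∧Ω₇ − (4/3)θ₃∧Ω₅ + θ₄∧Ω₃ + θ₅∧Ω₄. -/
/-!
STATEMENT 13: existence of connection 1-forms Ω₁,…,Ω₇ satisfying Cartan's
structure equations for the coframing (θ₁,…,θ₅) adapted to the rolling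
distribution.
-/

noncomputable section

open Real

/-- exterior derivative of a 1-form -/
def extd (ω : (Fin 5 → ℝ) → ((Fin 5 → ℝ) →L[ℝ] ℝ)) :
    (Fin 5 → ℝ) → (Fin 5 → ℝ) → (Fin 5 → ℝ) → ℝ :=
  fun a u v => fderiv ℝ (fun x => ω x v) a u - fderiv ℝ (fun x => ω x u) a v

/-- wedge product of two 1-forms -/
def wedge (ω η : (Fin 5 → ℝ) → ((Fin 5 → ℝ) →L[ℝ] ℝ)) :
    (Fin 5 → ℝ) → (Fin 5 → ℝ) → (Fin 5 → ℝ) → ℝ :=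
  fun a u v => ω a u * η a v - ω a v * η a u

/-- θ₁ = ω₁ -/
def θ₁ (α : ℝ) := ω₁ α
/-- θ₂ = ω₂ -/
def θ₂ := ω₂
/-- θ₃ = c·ω₃ -/
def θ₃ (α c : ℝ) : (Fin 5 → ℝ) → ((Fin 5 → ℝ) →L[ℝ] ℝ) := fun a => c • ω₃ α a
/-- θ₄ = (1/c)·ω₄ + Q·θ₂ where Q = (3α²−7)c²/10 -/
def θ₄ (α c : ℝ) : (Fin 5 → ℝ) → ((Fin 5 → ℝ) →L[ℝ] ℝ) :=
  fun a => (1/c) • ω₄ a + ((3*α^2 - 7) * c^2 / 10) • θ₂ a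
/-- θ₅ = (1/c)·ω₅ + Q·θ₁ where Q = (3α²−7)c²/10 -/
def θ₅ (α c : ℝ) : (Fin 5 → ℝ) → ((Fin 5 → ℝ) →L[ℝ] ℝ) :=
  fun a => (1/c) • ω₅ α a + ((3*α^2 - 7) * c^2 / 10) • θ₁ α a



section CartanAux

lemma hExp' (α : ℝ) (b : Fin 5 → ℝ) :
    HasFDerivAt (fun x : Fin 5 → ℝ => exp (α * x 0)) ((α * exp (α * b 0)) • dc 0) b := by
  have hx0 : HasFDerivAt (fun x : Fin 5 → ℝ => x 0) (dc 0) b := (dc 0).hasFDerivAt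
  have h0 : HasFDerivAt (fun x : Fin 5 → ℝ => α * x 0) (α • dc 0) b := hx0.const_mul α
  have h := (Real.hasDerivAt_exp (α * b 0)).comp_hasFDerivAt b h0
  simp only [smul_smul, mul_comm] at h
  exact h

lemma hSinh1' (b : Fin 5 → ℝ) :
    HasFDerivAt (fun x : Fin 5 → ℝ => sinh (x 1)) (cosh (b 1) • dc 1) b := by
  have hx1 : HasFDerivAt (fun x : Fin 5 → ℝ => x 1) (dc 1) b := (dc 1).hasFDerivAt
  exact (Real.hasDerivAt_sinh (b 1)).comp_hasFDerivAt b hx1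

lemma hCosh1' (b : Fin 5 → ℝ) :
    HasFDerivAt (fun x : Fin 5 → ℝ => cosh (x 1)) (sinh (b 1) • dc 1) b := by
  have hx1 : HasFDerivAt (fun x : Fin 5 → ℝ => x 1) (dc 1) b := (dc 1).hasFDerivAt
  exact (Real.hasDerivAt_cosh (b 1)).comp_hasFDerivAt b hx1

lemma hSinh2' (b : Fin 5 → ℝ) :
    HasFDerivAt (fun x : Fin 5 → ℝ => sinh (x 2)) (cosh (b 2) • dc 2) b := by
  have hx2 : HasFDerivAt (fun x : Fin 5 → ℝ => x 2) (dc 2) b := (dc 2).hasFDerivAt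
  exact (Real.hasDerivAt_sinh (b 2)).comp_hasFDerivAt b hx2

lemma hCosh2' (b : Fin 5 → ℝ) :
    HasFDerivAt (fun x : Fin 5 → ℝ => cosh (x 2)) (sinh (b 2) • dc 2) b := by
  have hx2 : HasFDerivAt (fun x : Fin 5 → ℝ => x 2) (dc 2) b := (dc 2).hasFDerivAt
  exact (Real.hasDerivAt_cosh (b 2)).comp_hasFDerivAt b hx2

lemma hTh1 (α : ℝ) (w b : Fin 5 → ℝ) :
    HasFDerivAt (fun x => θ₁ α x w)
      ((-(α * exp (α * b 0) * w 4)) • dc 0 + (-(cosh (b 1) * cosh (b 2) * w 3)) • dc 1 +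
        (cosh (b 2) * w 1 - sinh (b 1) * sinh (b 2) * w 3) • dc 2) b := by
  have hfun : (fun x => θ₁ α x w) =
      fun x : Fin 5 → ℝ =>
        -(sinh (x 1) * cosh (x 2) * w 3 - sinh (x 2) * w 1 + exp (α * x 0) * w 4) := by
    funext x
    simp only [θ₁, ω₁, σ₁, dc, ContinuousLinearMap.add_apply, ContinuousLinearMap.sub_apply, ContinuousLinearMap.neg_apply,
    ContinuousLinearMap.smul_apply, ContinuousLinearMap.proj_apply, ContinuousLinearMap.zero_apply,
    smul_eq_mul]
    try ring
  rw [hfun]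
  have h := (((((hSinh1' b).mul (hCosh2' b)).mul_const (w 3)).sub
      ((hSinh2' b).mul_const (w 1))).add ((hExp' α b).mul_const (w 4))).neg
  refine h.congr_fderiv ?_
  refine ContinuousLinearMap.ext fun y => ?_
  simp [dc, smul_eq_mul]
  ring

lemma hTh2 (w b : Fin 5 → ℝ) :
    HasFDerivAt (fun x => θ₂ x w)
      ((-(cosh (b 1) * sinh (b 2) * w 3)) • dc 1 +
        (sinh (b 2) * w 1 - sinh (b 1) * cosh (b 2) * w 3) • dc 2) b := by
  have hfun : (fun x => θ₂ x w) =
      fun x : Fin 5 → ℝ => w 0 + cosh (x 2) * w 1 - sinh (x 1) * sinh (x 2) * w 3 := by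
    funext x
    simp only [θ₂, ω₂, σ₂, dc, ContinuousLinearMap.add_apply, ContinuousLinearMap.sub_apply, ContinuousLinearMap.neg_apply,
    ContinuousLinearMap.smul_apply, ContinuousLinearMap.proj_apply, ContinuousLinearMap.zero_apply,
    smul_eq_mul]
    try ring
  rw [hfun]
  have h := ((hasFDerivAt_const (w 0) b).add ((hCosh2' b).mul_const (w 1))).sub
      ((((hSinh1' b).mul (hSinh2' b))).mul_const (w 3))
  refine h.congr_fderiv ?_
  refine ContinuousLinearMap.ext fun y => ?_
  simp [dc, smul_eq_mul]
  ring

lemma hTh3 (α cc : ℝ) (w b : Fin 5 → ℝ) :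
    HasFDerivAt (fun x => θ₃ α cc x w)
      ((-(cc * α * α * exp (α * b 0) * w 4)) • dc 0 + (cc * sinh (b 1) * w 3) • dc 1) b := by
  have hfun : (fun x => θ₃ α cc x w) =
      fun x : Fin 5 → ℝ => cc * (w 2 + cosh (x 1) * w 3 - α * exp (α * x 0) * w 4) := by
    funext x
    simp only [θ₃, ω₃, σ₃, dc, ContinuousLinearMap.add_apply, ContinuousLinearMap.sub_apply, ContinuousLinearMap.neg_apply,
    ContinuousLinearMap.smul_apply, ContinuousLinearMap.proj_apply, ContinuousLinearMap.zero_apply,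
    smul_eq_mul]
    try ring
  rw [hfun]
  have h := (((hasFDerivAt_const (w 2) b).add ((hCosh1' b).mul_const (w 3))).sub
      (((hExp' α b).const_mul α).mul_const (w 4))).const_mul cc
  refine h.congr_fderiv ?_
  refine ContinuousLinearMap.ext fun y => ?_
  simp [dc, smul_eq_mul]
  ring

lemma hTh4 (α cc : ℝ) (w b : Fin 5 → ℝ) :
    HasFDerivAt (fun x => θ₄ α cc x w)
      ((-((3*α^2 - 7) * cc^2 / 10 * cosh (b 1) * sinh (b 2) * w 3)) • dc 1 +
        ((3*α^2 - 7) * cc^2 / 10 * (sinh (b 2) * w 1 - sinh (b 1) * cosh (b 2) * w 3)) • dc 2) b := by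
  have hfun : (fun x => θ₄ α cc x w) =
      fun x : Fin 5 → ℝ => (1/cc) * (-(w 0)) +
        (3*α^2 - 7) * cc^2 / 10 * (w 0 + cosh (x 2) * w 1 - sinh (x 1) * sinh (x 2) * w 3) := by
    funext x
    simp only [θ₄, θ₂, ω₂, ω₄, σ₂, dc, ContinuousLinearMap.add_apply, ContinuousLinearMap.sub_apply, ContinuousLinearMap.neg_apply,
    ContinuousLinearMap.smul_apply, ContinuousLinearMap.proj_apply, ContinuousLinearMap.zero_apply,
    smul_eq_mul]
    try ring
  rw [hfun]
  have h := (hasFDerivAt_const ((1/cc) * (-(w 0))) b).add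
      ((((hasFDerivAt_const (w 0) b).add ((hCosh2' b).mul_const (w 1))).sub
        ((((hSinh1' b).mul (hSinh2' b))).mul_const (w 3))).const_mul ((3*α^2 - 7) * cc^2 / 10))
  refine h.congr_fderiv ?_
  refine ContinuousLinearMap.ext fun y => ?_
  simp [dc, smul_eq_mul]
  ring

lemma hTh5 (α cc : ℝ) (w b : Fin 5 → ℝ) :
    HasFDerivAt (fun x => θ₅ α cc x w)
      (((1/cc) * (α * exp (α * b 0) * w 4) - (3*α^2 - 7) * cc^2 / 10 * (α * exp (α * b 0) * w 4)) • dc 0 +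
        (-((3*α^2 - 7) * cc^2 / 10 * (cosh (b 1) * cosh (b 2) * w 3))) • dc 1 +
        ((3*α^2 - 7) * cc^2 / 10 * (cosh (b 2) * w 1 - sinh (b 1) * sinh (b 2) * w 3)) • dc 2) b := by
  have hfun : (fun x => θ₅ α cc x w) =
      fun x : Fin 5 → ℝ => (1/cc) * (exp (α * x 0) * w 4) +
        (3*α^2 - 7) * cc^2 / 10 *
          (-(sinh (x 1) * cosh (x 2) * w 3 - sinh (x 2) * w 1 + exp (α * x 0) * w 4)) := by
    funext x
    simp only [θ₅, θ₁, ω₁, ω₅, σ₁, dc, ContinuousLinearMap.add_apply, ContinuousLinearMap.sub_apply, ContinuousLinearMap.neg_apply,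
    ContinuousLinearMap.smul_apply, ContinuousLinearMap.proj_apply, ContinuousLinearMap.zero_apply,
    smul_eq_mul]
    try ring
  rw [hfun]
  have h := (((hExp' α b).mul_const (w 4)).const_mul (1/cc)).add
      (((((((hSinh1' b).mul (hCosh2' b)).mul_const (w 3)).sub
        ((hSinh2' b).mul_const (w 1))).add ((hExp' α b).mul_const (w 4))).neg).const_mul
          ((3*α^2 - 7) * cc^2 / 10))
  refine h.congr_fderiv ?_
  refine ContinuousLinearMap.ext fun y => ?_
  simp [dc, smul_eq_mul]
  ring

lemma extd_th1 (α : ℝ) (a u v : Fin 5 → ℝ) :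
    extd (θ₁ α) a u v = (cosh (a 2)) * (u 2) * (v 1) + (-1) * (cosh (a 2)) * (u 1) * (v 2) + (cosh (a 1)) * (cosh (a 2)) * (u 3) * (v 1) + (-1) * (cosh (a 1)) * (cosh (a 2)) * (u 1) * (v 3) + (sinh (a 1)) * (sinh (a 2)) * (u 3) * (v 2) + (-1) * (sinh (a 1)) * (sinh (a 2)) * (u 2) * (v 3) + α * (exp (α * a 0)) * (u 4) * (v 0) + (-1) * α * (exp (α * a 0)) * (u 0) * (v 4) := by
  simp only [extd, (hTh1 α v a).fderiv, (hTh1 α u a).fderiv, ContinuousLinearMap.add_apply, ContinuousLinearMap.sub_apply, ContinuousLinearMap.neg_apply,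
    ContinuousLinearMap.smul_apply, ContinuousLinearMap.proj_apply, ContinuousLinearMap.zero_apply,
    smul_eq_mul, dc]
  ring

lemma extd_th2 (a u v : Fin 5 → ℝ) :
    extd θ₂ a u v = (sinh (a 2)) * (u 2) * (v 1) + (-1) * (sinh (a 2)) * (u 1) * (v 2) + (cosh (a 1)) * (sinh (a 2)) * (u 3) * (v 1) + (-1) * (cosh (a 1)) * (sinh (a 2)) * (u 1) * (v 3) + (sinh (a 1)) * (cosh (a 2)) * (u 3) * (v 2) + (-1) * (sinh (a 1)) * (cosh (a 2)) * (u 2) * (v 3) := by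
  simp only [extd, (hTh2 v a).fderiv, (hTh2 u a).fderiv, ContinuousLinearMap.add_apply, ContinuousLinearMap.sub_apply, ContinuousLinearMap.neg_apply,
    ContinuousLinearMap.smul_apply, ContinuousLinearMap.proj_apply, ContinuousLinearMap.zero_apply,
    smul_eq_mul, dc]
  ring

lemma extd_th3 (α c : ℝ) (a u v : Fin 5 → ℝ) :
    extd (θ₃ α c) a u v = (-1) * c * (sinh (a 1)) * (u 3) * (v 1) + c * (sinh (a 1)) * (u 1) * (v 3) + α * α * c * (exp (α * a 0)) * (u 4) * (v 0) + (-1) * α * α * c * (exp (α * a 0)) * (u 0) * (v 4) := by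
  simp only [extd, (hTh3 α c v a).fderiv, (hTh3 α c u a).fderiv, ContinuousLinearMap.add_apply, ContinuousLinearMap.sub_apply, ContinuousLinearMap.neg_apply,
    ContinuousLinearMap.smul_apply, ContinuousLinearMap.proj_apply, ContinuousLinearMap.zero_apply,
    smul_eq_mul, dc]
  ring

lemma extd_th4 (α c : ℝ) (a u v : Fin 5 → ℝ) :
    extd (θ₄ α c) a u v = (-7/10) * c * c * (sinh (a 2)) * (u 2) * (v 1) + (7/10) * c * c * (sinh (a 2)) * (u 1) * (v 2) + (-7/10) * c * c * (cosh (a 1)) * (sinh (a 2)) * (u 3) * (v 1) + (7/10) * c * c * (cosh (a 1)) * (sinh (a 2)) * (u 1) * (v 3) + (-7/10) * c * c * (sinh (a 1)) * (cosh (a 2)) * (u 3) * (v 2) + (7/10) * c * c * (sinh (a 1)) * (cosh (a 2)) * (u 2) * (v 3) + (3/10) * α * α * c * c * (sinh (a 2)) * (u 2) * (v 1) + (-3/10) * α * α * c * c * (sinh (a 2)) * (u 1) * (v 2) + (3/10) * α * α * c * c * (cosh (a 1)) * (sinh (a 2)) * (u 3) * (v 1) + (-3/10) * α * α * c * c * (cosh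 (a 1)) * (sinh (a 2)) * (u 1) * (v 3) + (3/10) * α * α * c * c * (sinh (a 1)) * (cosh (a 2)) * (u 3) * (v 2) + (-3/10) * α * α * c * c * (sinh (a 1)) * (cosh (a 2)) * (u 2) * (v 3) := by
  simp only [extd, (hTh4 α c v a).fderiv, (hTh4 α c u a).fderiv, ContinuousLinearMap.add_apply, ContinuousLinearMap.sub_apply, ContinuousLinearMap.neg_apply,
    ContinuousLinearMap.smul_apply, ContinuousLinearMap.proj_apply, ContinuousLinearMap.zero_apply,
    smul_eq_mul, dc]
  ring

lemma extd_th5 (α c : ℝ) (a u v : Fin 5 → ℝ) :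
    extd (θ₅ α c) a u v = (-7/10) * c * c * (cosh (a 2)) * (u 2) * (v 1) + (7/10) * c * c * (cosh (a 2)) * (u 1) * (v 2) + (-7/10) * c * c * (cosh (a 1)) * (cosh (a 2)) * (u 3) * (v 1) + (7/10) * c * c * (cosh (a 1)) * (cosh (a 2)) * (u 1) * (v 3) + (-7/10) * c * c * (sinh (a 1)) * (sinh (a 2)) * (u 3) * (v 2) + (7/10) * c * c * (sinh (a 1)) * (sinh (a 2)) * (u 2) * (v 3) + (-1) * α * (exp (α * a 0)) * (u 4) * (v 0) * (1/c) + α * (exp (α * a 0)) * (u 0) * (v 4) * (1/c) + (-7/10) * α * c * c * (exp (α * a 0)) * (u 4) * (v 0) + (7/10) * α * c * c * (exp (α * a 0)) * (u 0) * (v 4) + (3/10) * α * α * c * c * (cosh (a 2)) * (u 2) * (v 1) + (-3/10) * α * α * c * c * (cosh (a 2)) * (u 1) * (v 2) + (3/10) * α * α * c * c * (cosh (a 1)) * (cosh (a 2)) * (u 3) * (v 1) + (-3/10) * α * α * c * c * (cosh (a 1)) * (cosh (a 2)) * (u 1) * (v 3) + (3/10) * α * α * c * c * (sinh (a 1)) *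 (sinh (a 2)) * (u 3) * (v 2) + (-3/10) * α * α * c * c * (sinh (a 1)) * (sinh (a 2)) * (u 2) * (v 3) + (3/10) * α * α * α * c * c * (exp (α * a 0)) * (u 4) * (v 0) + (-3/10) * α * α * α * c * c * (exp (α * a 0)) * (u 0) * (v 4) := by
  simp only [extd, (hTh5 α c v a).fderiv, (hTh5 α c u a).fderiv, ContinuousLinearMap.add_apply, ContinuousLinearMap.sub_apply, ContinuousLinearMap.neg_apply,
    ContinuousLinearMap.smul_apply, ContinuousLinearMap.proj_apply, ContinuousLinearMap.zero_apply,
    smul_eq_mul, dc]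
  ring

/-- the connection form Ω₂ = Ω₃ -/
def OmB (α cc : ℝ) : (Fin 5 → ℝ) → ((Fin 5 → ℝ) →L[ℝ] ℝ) :=
  fun a => (α * cc^3 * (3*α^2 - 7) / 10) • θ₁ α a + (cc^2 * (3 - 7*α^2) / 10) • θ₃ α cc a +
    (-(α * cc)) • θ₅ α cc a

/-- the connection form Ω₅ -/
def OmE (α cc : ℝ) : (Fin 5 → ℝ) → ((Fin 5 → ℝ) →L[ℝ] ℝ) :=
  fun a => (cc^4 * (-9 + 82*α^2 - 9*α^4) / 200) • θ₂ a + (3 * cc^2 * (1 + α^2) / 10) • θ₄ α cc a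

/-- the connection form Ω₆ -/
def OmF (α cc : ℝ) : (Fin 5 → ℝ) → ((Fin 5 → ℝ) →L[ℝ] ℝ) :=
  fun a => (-(cc^4 * (-9 + 82*α^2 - 9*α^4) / 200)) • θ₁ α a +
    (-(3 * cc^2 * (1 + α^2) / 10)) • θ₅ α cc a

/-- the connection form Ω₇ -/
def OmG (α cc : ℝ) : (Fin 5 → ℝ) → ((Fin 5 → ℝ) →L[ℝ] ℝ) :=
  fun a => (cc^4 * (-9*α^4 + 2*α^2 - 9) / 60) • θ₃ α cc a

lemma cdSinh1 : ContDiff ℝ (⊤ : ℕ∞) (fun a : Fin 5 → ℝ => sinh (a 1)) :=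
  Real.contDiff_sinh.comp (dc 1).contDiff
lemma cdCosh1 : ContDiff ℝ (⊤ : ℕ∞) (fun a : Fin 5 → ℝ => cosh (a 1)) :=
  Real.contDiff_cosh.comp (dc 1).contDiff
lemma cdSinh2 : ContDiff ℝ (⊤ : ℕ∞) (fun a : Fin 5 → ℝ => sinh (a 2)) :=
  Real.contDiff_sinh.comp (dc 2).contDiff
lemma cdCosh2 : ContDiff ℝ (⊤ : ℕ∞) (fun a : Fin 5 → ℝ => cosh (a 2)) :=
  Real.contDiff_cosh.comp (dc 2).contDiff
lemma cdExp (α : ℝ) : ContDiff ℝ (⊤ : ℕ∞) (fun a : Fin 5 → ℝ => exp (α * a 0)) :=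
  Real.contDiff_exp.comp (contDiff_const.mul (dc 0).contDiff)

lemma cdTh1 (α : ℝ) : ContDiff ℝ (⊤ : ℕ∞) (θ₁ α) := by
  unfold θ₁ ω₁ σ₁
  exact ((((cdSinh1.mul cdCosh2).fun_smul contDiff_const).sub
    (cdSinh2.fun_smul contDiff_const)).add ((cdExp α).fun_smul contDiff_const)).neg

lemma cdTh2 : ContDiff ℝ (⊤ : ℕ∞) θ₂ := by
  unfold θ₂ ω₂ σ₂
  exact ((((cdSinh1.mul cdSinh2).fun_smul contDiff_const).neg.add
    (cdCosh2.fun_smul contDiff_const)).add contDiff_const)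

lemma cdTh3 (α cc : ℝ) : ContDiff ℝ (⊤ : ℕ∞) (θ₃ α cc) := by
  unfold θ₃ ω₃ σ₃
  exact contDiff_const.fun_smul ((contDiff_const.sub (cdCosh1.fun_smul contDiff_const)).add
    ((contDiff_const.mul (cdExp α)).fun_smul contDiff_const)).neg

lemma cdTh4 (α cc : ℝ) : ContDiff ℝ (⊤ : ℕ∞) (θ₄ α cc) := by
  unfold θ₄ ω₄
  exact (contDiff_const.fun_smul contDiff_const).add (contDiff_const.fun_smul cdTh2)

lemma cdTh5 (α cc : ℝ) : ContDiff ℝ (⊤ : ℕ∞) (θ₅ α cc) := by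
  unfold θ₅ ω₅
  exact (contDiff_const.fun_smul ((cdExp α).fun_smul contDiff_const)).add
    (contDiff_const.fun_smul (cdTh1 α))

lemma cdOmB (α cc : ℝ) : ContDiff ℝ (⊤ : ℕ∞) (OmB α cc) := by
  unfold OmB
  exact ((contDiff_const.fun_smul (cdTh1 α)).add (contDiff_const.fun_smul (cdTh3 α cc))).add
    (contDiff_const.fun_smul (cdTh5 α cc))
lemma cdOmE (α cc : ℝ) : ContDiff ℝ (⊤ : ℕ∞) (OmE α cc) := by
  unfold OmE
  exact (contDiff_const.fun_smul cdTh2).add (contDiff_const.fun_smul (cdTh4 α cc))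
lemma cdOmF (α cc : ℝ) : ContDiff ℝ (⊤ : ℕ∞) (OmF α cc) := by
  unfold OmF
  exact (contDiff_const.fun_smul (cdTh1 α)).add (contDiff_const.fun_smul (cdTh5 α cc))
lemma cdOmG (α cc : ℝ) : ContDiff ℝ (⊤ : ℕ∞) (OmG α cc) := by
  unfold OmG
  exact contDiff_const.fun_smul (cdTh3 α cc)

end CartanAux

theorem rolling_coframing_satisfies_cartan_structure_equations
    (α : ℝ) (hα : α^2 ≠ 1) (c : ℝ) (hc : c ≠ 0) (hc3 : c^3 = 1/(α^2 - 1)) :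
    ∃ Ω₁ Ω₂ Ω₃ Ω₄ Ω₅ Ω₆ Ω₇ : (Fin 5 → ℝ) → ((Fin 5 → ℝ) →L[ℝ] ℝ),
      ContDiff ℝ (⊤ : ℕ∞) Ω₁ ∧ ContDiff ℝ (⊤ : ℕ∞) Ω₂ ∧ ContDiff ℝ (⊤ : ℕ∞) Ω₃ ∧ ContDiff ℝ (⊤ : ℕ∞) Ω₄ ∧
      ContDiff ℝ (⊤ : ℕ∞) Ω₅ ∧ ContDiff ℝ (⊤ : ℕ∞) Ω₆ ∧ ContDiff ℝ (⊤ : ℕ∞) Ω₇ ∧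
      ∀ a u v : Fin 5 → ℝ,
        extd (θ₁ α) a u v =
          wedge (θ₁ α) (fun b => (2:ℝ) • Ω₁ b + Ω₄ b) a u v + wedge θ₂ Ω₂ a u v
          + wedge (θ₃ α c) (θ₄ α c) a u v ∧
        extd θ₂ a u v =
          wedge (θ₁ α) Ω₃ a u v + wedge θ₂ (fun b => Ω₁ b + (2:ℝ) • Ω₄ b) a u v
          + wedge (θ₃ α c) (θ₅ α c) a u v ∧
        extd (θ₃ α c) a u v =
          wedge (θ₁ α) Ω₅ a u v + wedge θ₂ Ω₆ a u v
          + wedge (θ₃ α c) (fun b => Ω₁ b + Ω₄ b) a u v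
          + wedge (θ₄ α c) (θ₅ α c) a u v ∧
        extd (θ₄ α c) a u v =
          wedge (θ₁ α) Ω₇ a u v + (4/3) * wedge (θ₃ α c) Ω₆ a u v
          + wedge (θ₄ α c) Ω₁ a u v + wedge (θ₅ α c) Ω₂ a u v ∧
        extd (θ₅ α c) a u v =
          wedge θ₂ Ω₇ a u v - (4/3) * wedge (θ₃ α c) Ω₅ a u v
          + wedge (θ₄ α c) Ω₃ a u v + wedge (θ₅ α c) Ω₄ a u v := by
  have hα' : α^2 - 1 ≠ 0 := sub_ne_zero.mpr hα
  have hK : c^3 * α^2 = c^3 + 1 := by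
    field_simp at hc3
    linear_combination hc3
  have hJ : (1:ℝ)/c = c^2 * α^2 - c^2 := by
    rw [div_eq_iff hc]
    linear_combination -hK
  refine ⟨fun _ => 0, OmB α c, OmB α c, fun _ => 0, OmE α c, OmF α c, OmG α c,
    contDiff_const, cdOmB α c, cdOmB α c, contDiff_const, cdOmE α c, cdOmF α c, cdOmG α c,
    fun a u v => ?_⟩
  have hy : cosh (a 1)^2 = sinh (a 1)^2 + 1 := by
    have := Real.cosh_sq (a 1); linarith
  have hz : cosh (a 2)^2 = sinh (a 2)^2 + 1 := by
    have := Real.cosh_sq (a 2); linarith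
  refine ⟨?_, ?_, ?_, ?_, ?_⟩
  · rw [extd_th1]
    simp only [wedge, OmB, OmE, OmF, OmG, θ₁, θ₂, θ₃, θ₄, θ₅, ω₁, ω₂, ω₃, ω₄, ω₅, σ₁, σ₂, σ₃, dc,
      ContinuousLinearMap.add_apply, ContinuousLinearMap.sub_apply, ContinuousLinearMap.neg_apply,
      ContinuousLinearMap.smul_apply, ContinuousLinearMap.proj_apply, ContinuousLinearMap.zero_apply,
      smul_eq_mul, smul_zero, zero_add, add_zero, mul_zero, zero_mul]
    linear_combination ((-1) * (cosh (a 2)) * (u 2) * (v 1) + (cosh (a 2)) * (u 1) * (v 2) + (-1) * (cosh (a 1)) * (cosh (a 2)) * (u 3) * (v 1) + (cosh (a 1)) * (cosh (a 2)) * (u 1) * (v 3) + (-1) * (sinh (a 1)) * (sinh (a 2)) * (u 3) * (v 2) + (sinh (a 1)) * (sinh (a 2)) * (u 2) * (v 3) + (-1) * α * (exp (α * a 0)) * (u 4) * (v 0) + α * (exp (α * a 0)) * (u 0) * (v 4)) * hK + (c * (u 2) * (v 0) + (-1) * c * (u 0) * (v 2) + c * (cosh (a 1)) * (u 3) * (v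 0) + (-1) * c * (cosh (a 1)) * (u 0) * (v 3) + (-2) * α * c * (exp (α * a 0)) * (u 4) * (v 0) + (2) * α * c * (exp (α * a 0)) * (u 0) * (v 4) + (-1) * α * c * (cosh (a 2)) * (exp (α * a 0)) * (u 4) * (v 1) + α * c * (cosh (a 2)) * (exp (α * a 0)) * (u 1) * (v 4) + α * c * (sinh (a 1)) * (sinh (a 2)) * (exp (α * a 0)) * (u 4) * (v 3) + (-1) * α * c * (sinh (a 1)) * (sinh (a 2)) * (exp (α * a 0)) * (u 3) * (v 4)) * hJ
  · rw [extd_th2]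
    simp only [wedge, OmB, OmE, OmF, OmG, θ₁, θ₂, θ₃, θ₄, θ₅, ω₁, ω₂, ω₃, ω₄, ω₅, σ₁, σ₂, σ₃, dc,
      ContinuousLinearMap.add_apply, ContinuousLinearMap.sub_apply, ContinuousLinearMap.neg_apply,
      ContinuousLinearMap.smul_apply, ContinuousLinearMap.proj_apply, ContinuousLinearMap.zero_apply,
      smul_eq_mul, smul_zero, zero_add, add_zero, mul_zero, zero_mul]
    linear_combination ((-1) * (sinh (a 2)) * (u 2) * (v 1) + (sinh (a 2)) * (u 1) * (v 2) + (-1) * (cosh (a 1)) * (sinh (a 2)) * (u 3) * (v 1) + (cosh (a 1)) * (sinh (a 2)) * (u 1) * (v 3) + (-1) * (sinh (a 1)) * (cosh (a 2)) * (u 3) * (v 2) + (sinh (a 1)) * (cosh (a 2)) * (u 2) * (v 3)) * hK + (c * (exp (α * a 0)) * (u 4) * (v 2) + (-1) * c * (exp (α * a 0)) * (u 2) * (v 4) + c * (cosh (a 1)) * (exp (α * a 0)) * (u 4) * (v 3) + (-1) * c * (cosh (a 1)) * (exp (α * a 0)) * (u 3) * (v 4) + (-1) * α * c * (sinh (a 2))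 * (exp (α * a 0)) * (u 4) * (v 1) + α * c * (sinh (a 2)) * (exp (α * a 0)) * (u 1) * (v 4) + α * c * (sinh (a 1)) * (cosh (a 2)) * (exp (α * a 0)) * (u 4) * (v 3) + (-1) * α * c * (sinh (a 1)) * (cosh (a 2)) * (exp (α * a 0)) * (u 3) * (v 4)) * hJ
  · rw [extd_th3]
    simp only [wedge, OmB, OmE, OmF, OmG, θ₁, θ₂, θ₃, θ₄, θ₅, ω₁, ω₂, ω₃, ω₄, ω₅, σ₁, σ₂, σ₃, dc,
      ContinuousLinearMap.add_apply, ContinuousLinearMap.sub_apply, ContinuousLinearMap.neg_apply,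
      ContinuousLinearMap.smul_apply, ContinuousLinearMap.proj_apply, ContinuousLinearMap.zero_apply,
      smul_eq_mul, smul_zero, zero_add, add_zero, mul_zero, zero_mul]
    linear_combination ((-1) * c * c * c * c * (sinh (a 1)) * (u 3) * (v 1) + c * c * c * c * (sinh (a 1)) * (u 1) * (v 3) + α * α * c * c * c * c * (sinh (a 1)) * (u 3) * (v 1) + (-1) * α * α * c * c * c * c * (sinh (a 1)) * (u 1) * (v 3)) * hz + (c * (sinh (a 1)) * (u 3) * (v 1) + (-1) * c * (sinh (a 1)) * (u 1) * (v 3) + (-1) * α * α * c * (exp (α * a 0)) * (u 4) * (v 0) + α * α * c * (exp (α * a 0)) * (u 0) * (v 4)) * hK + ((-1) * (exp (α * a 0)) * (u 4) * (v 0) * (1/c) + (exp (α * a 0)) * (u 0) * (v 4) * (1/c) + (-1) * c * c * (exp (α * a 0)) * (u 4) * (v 0) + c * c * (exp (α * a 0)) * (u 0) * (v 4) + (-1) * c * c * (cosh (a 2)) * (exp (α * a 0)) * (u 4) * (v 1) + c * c * (cosh (a 2)) * (exp (α * a 0)) * (u 1) * (v 4) + c * c * (sinh (a 2)) * (u 1)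 * (v 0) + (-1) * c * c * (sinh (a 2)) * (u 0) * (v 1) + (-1) * c * c * (sinh (a 1)) * (cosh (a 2)) * (u 3) * (v 0) + c * c * (sinh (a 1)) * (cosh (a 2)) * (u 0) * (v 3) + c * c * (sinh (a 1)) * (sinh (a 2)) * (exp (α * a 0)) * (u 4) * (v 3) + (-1) * c * c * (sinh (a 1)) * (sinh (a 2)) * (exp (α * a 0)) * (u 3) * (v 4) + (-1) * α * α * c * c * (exp (α * a 0)) * (u 4) * (v 0) + α * α * c * c * (exp (α * a 0)) * (u 0) * (v 4)) * hJ
  · rw [extd_th4]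
    simp only [wedge, OmB, OmE, OmF, OmG, θ₁, θ₂, θ₃, θ₄, θ₅, ω₁, ω₂, ω₃, ω₄, ω₅, σ₁, σ₂, σ₃, dc,
      ContinuousLinearMap.add_apply, ContinuousLinearMap.sub_apply, ContinuousLinearMap.neg_apply,
      ContinuousLinearMap.smul_apply, ContinuousLinearMap.proj_apply, ContinuousLinearMap.zero_apply,
      smul_eq_mul, smul_zero, zero_add, add_zero, mul_zero, zero_mul]
    linear_combination ((7/10) * c * c * (sinh (a 2)) * (u 2) * (v 1) + (-7/10) * c * c * (sinh (a 2)) * (u 1) * (v 2) + (7/10) * c * c * (cosh (a 1)) * (sinh (a 2)) * (u 3) * (v 1) + (-7/10) * c * c * (cosh (a 1)) * (sinh (a 2)) * (u 1) * (v 3) + (7/10) * c * c * (sinh (a 1)) * (cosh (a 2)) * (u 3) * (v 2) + (-7/10) * c * c * (sinh (a 1)) * (cosh (a 2)) * (u 2) * (v 3) + (-3/10) * α * α * c * c * (sinh (a 2)) * (u 2) * (v 1) + (3/10) * α * α * c * c * (sinh (a 2)) * (u 1) * (v 2) + (-3/10) * α * α * c * c * (cosh (a 1)) * (sinh (a 2))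 * (u 3) * (v 1) + (3/10) * α * α * c * c * (cosh (a 1)) * (sinh (a 2)) * (u 1) * (v 3) + (-3/10) * α * α * c * c * (sinh (a 1)) * (cosh (a 2)) * (u 3) * (v 2) + (3/10) * α * α * c * c * (sinh (a 1)) * (cosh (a 2)) * (u 2) * (v 3)) * hK + ((-7/10) * c * c * c * (exp (α * a 0)) * (u 4) * (v 2) + (7/10) * c * c * c * (exp (α * a 0)) * (u 2) * (v 4) + (-7/10) * c * c * c * (cosh (a 1)) * (exp (α * a 0)) * (u 4) * (v 3) + (7/10) * c * c * c * (cosh (a 1)) * (exp (α * a 0)) * (u 3) * (v 4) + (7/10) * α * c * c * c * (sinh (a 2)) * (exp (α * a 0)) * (u 4) * (v 1) + (-7/10) * α * c * c * c * (sinh (a 2)) * (exp (α * a 0)) * (u 1) * (v 4) + (-7/10) * α * c * c * c * (sinh (a 1)) * (cosh (a 2)) * (exp (α * a 0)) * (u 4) * (v 3) + (7/10) * α * c * c * c * (sinh (a 1)) * (cosh (a 2)) * (exp (α * a 0)) * (u 3) * (v 4) + (3/10) * α * α * c * c * c * (exp (α * a 0)) * (u 4) * (v 2) + (-3/10) * α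 * α * c * c * c * (exp (α * a 0)) * (u 2) * (v 4) + (3/10) * α * α * c * c * c * (cosh (a 1)) * (exp (α * a 0)) * (u 4) * (v 3) + (-3/10) * α * α * c * c * c * (cosh (a 1)) * (exp (α * a 0)) * (u 3) * (v 4) + (-3/10) * α * α * α * c * c * c * (sinh (a 2)) * (exp (α * a 0)) * (u 4) * (v 1) + (3/10) * α * α * α * c * c * c * (sinh (a 2)) * (exp (α * a 0)) * (u 1) * (v 4) + (3/10) * α * α * α * c * c * c * (sinh (a 1)) * (cosh (a 2)) * (exp (α * a 0)) * (u 4) * (v 3) + (-3/10) * α * α * α * c * c * c * (sinh (a 1)) * (cosh (a 2)) * (exp (α * a 0)) * (u 3) * (v 4)) * hJ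
  · rw [extd_th5]
    simp only [wedge, OmB, OmE, OmF, OmG, θ₁, θ₂, θ₃, θ₄, θ₅, ω₁, ω₂, ω₃, ω₄, ω₅, σ₁, σ₂, σ₃, dc,
      ContinuousLinearMap.add_apply, ContinuousLinearMap.sub_apply, ContinuousLinearMap.neg_apply,
      ContinuousLinearMap.smul_apply, ContinuousLinearMap.proj_apply, ContinuousLinearMap.zero_apply,
      smul_eq_mul, smul_zero, zero_add, add_zero, mul_zero, zero_mul]
    linear_combination ((7/10) * c * c * (cosh (a 2)) * (u 2) * (v 1) + (-7/10) * c * c * (cosh (a 2)) * (u 1) * (v 2) + (7/10) * c * c * (cosh (a 1)) * (cosh (a 2)) * (u 3) * (v 1) + (-7/10) * c * c * (cosh (a 1)) * (cosh (a 2)) * (u 1) * (v 3) + (7/10) * c * c * (sinh (a 1)) * (sinh (a 2)) * (u 3) * (v 2) + (-7/10) * c * c * (sinh (a 1)) * (sinh (a 2)) * (u 2) * (v 3) + (-3/10) * α * c * c * (exp (α * a 0)) * (u 4) * (v 0) + (3/10) * α * c * c * (exp (α * a 0)) * (u 0) * (v 4) + (-3/10) * α * α * c * c * (cosh (a 2))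 * (u 2) * (v 1) + (3/10) * α * α * c * c * (cosh (a 2)) * (u 1) * (v 2) + (-3/10) * α * α * c * c * (cosh (a 1)) * (cosh (a 2)) * (u 3) * (v 1) + (3/10) * α * α * c * c * (cosh (a 1)) * (cosh (a 2)) * (u 1) * (v 3) + (-3/10) * α * α * c * c * (sinh (a 1)) * (sinh (a 2)) * (u 3) * (v 2) + (3/10) * α * α * c * c * (sinh (a 1)) * (sinh (a 2)) * (u 2) * (v 3) + (7/10) * α * α * α * c * c * (exp (α * a 0)) * (u 4) * (v 0) + (-7/10) * α * α * α * c * c * (exp (α * a 0)) * (u 0) * (v 4)) * hK + ((-7/10) * c * c * c * (u 2) * (v 0) + (7/10) * c * c * c * (u 0) * (v 2) + (-7/10) * c * c * c * (cosh (a 1)) * (u 3) * (v 0) + (7/10) * c * c * c * (cosh (a 1)) * (u 0) * (v 3) + (-1) * α * (exp (α * a 0)) * (u 4) * (v 0) + α * (exp (α * a 0)) * (u 0) * (v 4) + α * c * (exp (α * a 0)) * (u 4) * (v 0) * (1/c) + (-1) * α * c * (exp (α * a 0)) * (u 0) * (v 4) * (1/c) + (2/5) * α * c * c * c * (exp (α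 * a 0)) * (u 4) * (v 0) + (-2/5) * α * c * c * c * (exp (α * a 0)) * (u 0) * (v 4) + (7/10) * α * c * c * c * (cosh (a 2)) * (exp (α * a 0)) * (u 4) * (v 1) + (-7/10) * α * c * c * c * (cosh (a 2)) * (exp (α * a 0)) * (u 1) * (v 4) + (-7/10) * α * c * c * c * (sinh (a 1)) * (sinh (a 2)) * (exp (α * a 0)) * (u 4) * (v 3) + (7/10) * α * c * c * c * (sinh (a 1)) * (sinh (a 2)) * (exp (α * a 0)) * (u 3) * (v 4) + (3/10) * α * α * c * c * c * (u 2) * (v 0) + (-3/10) * α * α * c * c * c * (u 0) * (v 2) + (3/10) * α * α * c * c * c * (cosh (a 1)) * (u 3) * (v 0) + (-3/10) * α * α * c * c * c * (cosh (a 1)) * (u 0) * (v 3) + (2/5) * α * α * α * c * c * c * (exp (α * a 0)) * (u 4) * (v 0) + (-2/5) * α * α * α * c * c * c * (exp (α * a 0)) * (u 0) * (v 4) + (-3/10) * α * α * α * c * c * c * (cosh (a 2)) * (exp (α * a 0)) * (u 4) * (v 1) + (3/10) * α * α * α * c * c * c * (cosh (a 2)) * (exp (α * a 0)) * (u 1)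 * (v 4) + (3/10) * α * α * α * c * c * c * (sinh (a 1)) * (sinh (a 2)) * (exp (α * a 0)) * (u 4) * (v 3) + (-3/10) * α * α * α * c * c * c * (sinh (a 1)) * (sinh (a 2)) * (exp (α * a 0)) * (u 3) * (v 4)) * hJ


end
end
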